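/- Let z = (z_0,z_1,z_2,z_3) = (3−√3, (1+i)√3, (1−i)√3, −i(3−√3)) ∈ ℂ⁴. Then F_1(z) = 0, F_3(z) = 0, F_4(z) = 0, and F_6(z) ≠ 0. -/

import Mathlib

/-! Writing `z = (a, b, -i b, -i a)`, multiplication by `i` permutes the coordinates of `z` up to
sign, so the twelve squares `(z_i ± z_j)²` are six values each taken with both signs, and every odd
`F_k` vanishes. For `a = 3 - √3`, `b = (1 + i)√3` these six values are `6` times
`2it, -2, u, ū, itu, -itū` with `t = 2 - √3` and `u = 1 + i√3 = 2e^{iπ/3}`, so `u³ = ū³ = -8`;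
this gives `F_4 = 0` and makes `F_6` a nonzero multiple of `1 - t⁶`. -/

open Complex

/-- `F_k(z) = (1/6) Σ_{0 ≤ i < j ≤ 3} [(z_i - z_j)^{2k} + (z_i + z_j)^{2k}]`. -/
noncomputable def Fval (k : ℕ) (z : Fin 4 → ℂ) : ℂ :=
  (6⁻¹ : ℂ) * ∑ i : Fin 4, ∑ j : Fin 4,
    if i < j then (z i - z j) ^ (2 * k) + (z i + z j) ^ (2 * k) else 0

/-- The point `z = (3-√3, (1+i)√3, (1-i)√3, -i(3-√3))`. -/
noncomputable def zF : Fin 4 → ℂ :=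
  ![3 - (Real.sqrt 3 : ℝ), (1 + I) * (Real.sqrt 3 : ℝ),
    (1 - I) * (Real.sqrt 3 : ℝ), -I * (3 - (Real.sqrt 3 : ℝ))]

lemma Fval_quarter_turn (k : ℕ) (a b : ℂ) :
    Fval k ![a, b, -I * b, -I * a] = (1 + (-1) ^ k) / 6 *
      (((a + I * a) ^ 2) ^ k + ((b + I * b) ^ 2) ^ k + ((a + b) ^ 2) ^ k + ((a - b) ^ 2) ^ k +
        ((a + I * b) ^ 2) ^ k + ((a - I * b) ^ 2) ^ k) := by
  have pow_eq {x y : ℂ} (h : x ^ 2 = y) : x ^ (2 * k) = y ^ k := by rw [pow_mul, h]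
  have pow_eq_neg {x y : ℂ} (h : x ^ 2 = -y) : x ^ (2 * k) = (-1) ^ k * y ^ k := by
    rw [pow_mul, h, neg_pow]
  simp +decide only [Fval, Fin.sum_univ_four, Matrix.cons_val_zero,
    Matrix.cons_val_one, Matrix.cons_val_two, Matrix.cons_val_three, Matrix.head_cons,
    Matrix.tail_cons, if_true, if_false]
  rw [pow_eq (x := a - b) rfl, pow_eq (x := a + b) rfl,
    pow_eq (x := a - -I * b) (y := (a + I * b) ^ 2) (by ring),
    pow_eq (x := a + -I * b) (y := (a - I * b) ^ 2) (by ring),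
    pow_eq (x := a - -I * a) (y := (a + I * a) ^ 2) (by ring),
    pow_eq_neg (x := a + -I * a) (y := (a + I * a) ^ 2) (by linear_combination 2 * a ^ 2 * I_sq),
    pow_eq (x := b - -I * b) (y := (b + I * b) ^ 2) (by ring),
    pow_eq_neg (x := b + -I * b) (y := (b + I * b) ^ 2) (by linear_combination 2 * b ^ 2 * I_sq),
    pow_eq_neg (x := b - -I * a) (y := (a - I * b) ^ 2)
      (by linear_combination (a ^ 2 + b ^ 2) * I_sq),
    pow_eq_neg (x := b + -I * a) (y := (a + I * b) ^ 2)
      (by linear_combination (a ^ 2 + b ^ 2) * I_sq),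
    pow_eq_neg (x := -I * b - -I * a) (y := (a - b) ^ 2) (by linear_combination (a - b) ^ 2 * I_sq),
    pow_eq_neg (x := -I * b + -I * a) (y := (a + b) ^ 2) (by linear_combination (a + b) ^ 2 * I_sq)]
  ring

def quarterTurnPoint (s : ℂ) : Fin 4 → ℂ :=
  ![3 - s, (1 + I) * s, -I * ((1 + I) * s), -I * (3 - s)]

section
variable {s : ℂ}

lemma Fval_quarterTurnPoint (hs : s ^ 2 = 3) (k : ℕ) :
    Fval k (quarterTurnPoint s) = (1 + (-1) ^ k) / 6 * 6 ^ k *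
      ((2 * I * (2 - s)) ^ k + (-2) ^ k + (1 + I * s) ^ k + (I * (2 - s) * (1 + I * s)) ^ k +
        (-I * (2 - s) * (1 - I * s)) ^ k + (1 - I * s) ^ k) := by
  have sq_eq (x y : ℂ) (h : x ^ 2 = 6 * y) : (x ^ 2) ^ k = 6 ^ k * y ^ k := by
    rw [h, mul_pow]
  rw [quarterTurnPoint, Fval_quarter_turn,
    sq_eq (3 - s + I * (3 - s)) (2 * I * (2 - s)) (by grind [I_sq]),
    sq_eq ((1 + I) * s + I * ((1 + I) * s)) (-2) (by grind [I_sq]),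
    sq_eq (3 - s + (1 + I) * s) (1 + I * s) (by grind [I_sq]),
    sq_eq (3 - s - (1 + I) * s) (I * (2 - s) * (1 + I * s)) (by grind [I_sq]),
    sq_eq (3 - s + I * ((1 + I) * s)) (-I * (2 - s) * (1 - I * s)) (by grind [I_sq]),
    sq_eq (3 - s - I * ((1 + I) * s)) (1 - I * s) (by grind [I_sq])]
  ring

lemma one_add_I_mul_pow_three (hs : s ^ 2 = 3) : (1 + I * s) ^ 3 = -8 := by
  grind [I_sq]

lemma one_sub_I_mul_pow_three (hs : s ^ 2 = 3) : (1 - I * s) ^ 3 = -8 := by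
  grind [I_sq]

lemma Fval_four_quarterTurnPoint (hs : s ^ 2 = 3) : Fval 4 (quarterTurnPoint s) = 0 := by
  have hu := one_add_I_mul_pow_three hs
  have hv := one_sub_I_mul_pow_three hs
  rw [Fval_quarterTurnPoint hs]
  grind [I_sq]

lemma Fval_six_quarterTurnPoint (hs : s ^ 2 = 3) :
    Fval 6 (quarterTurnPoint s) = 6 ^ 5 * 384 * (1 - (2 - s) ^ 6) := by
  have hu := one_add_I_mul_pow_three hs
  have hv := one_sub_I_mul_pow_three hs
  rw [Fval_quarterTurnPoint hs]
  grind [I_sq]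

end

lemma zF_eq_quarterTurnPoint : zF = quarterTurnPoint √3 := by
  have h : (1 - I) * (√3 : ℂ) = -I * ((1 + I) * √3) := by linear_combination (√3 : ℂ) * I_sq
  rw [zF, quarterTurnPoint, h]

lemma two_sub_sqrt_three_pow_lt_one {n : ℕ} (hn : n ≠ 0) : (2 - √3) ^ n < 1 := by
  have h3 : √3 ^ 2 = 3 := Real.sq_sqrt (by norm_num)
  exact pow_lt_one₀ (by nlinarith [Real.sqrt_nonneg 3]) (by nlinarith [Real.sqrt_nonneg 3]) hn

/-- At `z = (3-√3, (1+i)√3, (1-i)√3, -i(3-√3))` one has `F₁(z) = F₃(z) = F₄(z) = 0`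
while `F₆(z) ≠ 0`. -/
theorem Fval_at_special_state :
    Fval 1 zF = 0 ∧ Fval 3 zF = 0 ∧ Fval 4 zF = 0 ∧ Fval 6 zF ≠ 0 := by
  have hs : ((√3 : ℝ) : ℂ) ^ 2 = 3 := by norm_cast; simp
  rw [zF_eq_quarterTurnPoint]
  refine ⟨?_, ?_, Fval_four_quarterTurnPoint hs, ?_⟩
  · rw [Fval_quarterTurnPoint hs]; norm_num
  · rw [Fval_quarterTurnPoint hs]; norm_num
  · rw [Fval_six_quarterTurnPoint hs]
    have ht : (6 : ℝ) ^ 5 * 384 * (1 - (2 - √3) ^ 6) ≠ 0 :=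
      mul_ne_zero (by norm_num) (sub_ne_zero.2 (two_sub_sqrt_three_pow_lt_one (by norm_num)).ne')
    exact_mod_cast ht
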